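/- arXiv:1209.5903 — 8 statements merged into one kernel-verified Lean document; each statement's English description precedes it below -/
import Mathlib

section
/- If the Set endofunctors F and B preserve monomorphisms with empty domain, then every homomorphism h : (X,f) → (Y,g) of (F,B)-dialgebras factors as h = m ∘ e, where e is a surjective dialgebra homomorphism onto a dialgebra (X', f') and m is an injective dialgebra homomorphism, and this factorisation is unique up to isomorphism. -/
open CategoryTheory

universe u

/-- An (F,B)-dialgebra: a set together with a map `F X → B X`. -/
structure Dialgebra (F B : Type u ⥤ Type u) where
  carrier : Type u
  str : F.obj carrier → B.obj carrier

/-- A dialgebra homomorphism: `g ∘ F h = B h ∘ f`. -/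
def IsDialgHom {F B : Type u ⥤ Type u} (X Y : Dialgebra F B)
    (h : X.carrier → Y.carrier) : Prop :=
  Y.str ∘ F.map (TypeCat.ofHom h) = B.map (TypeCat.ofHom h) ∘ X.str

/-!
Factor `h` through its image in `Set` and transport the structure of `X` to the image along
`e`, via a section of `F e` (every functor preserves surjections, since they split). Both
dialgebra laws then follow from one cancellation principle: if `m` is a homomorphism with
`B m` injective and `m ∘ i` is a homomorphism, so is `i`. Here `B m` is injective because an
injection with nonempty domain splits, hence is preserved by any functor, and the empty-domain
case is assumed. Uniqueness is that of image factorisations in `Set`, and the same cancellation makes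
the comparison bijection and its inverse homomorphisms.
-/

open Function TypeCat

namespace CategoryTheory.Functor

universe v

variable {α β γ : Type u} (G : Type u ⥤ Type v)

theorem map_ofHom_comp_apply (f : α → β) (g : β → γ) (x : G.obj α) :
    G.map (ofHom (g ∘ f)) x = G.map (ofHom g) (G.map (ofHom f) x) :=
  G.map_comp_apply (ofHom f) (ofHom g) x

theorem map_ofHom_surjective {f : α → β} (hf : Function.Surjective f) :
    Function.Surjective (G.map (ofHom f)) := by
  have : Epi (ofHom f) := (ofHom_epi_iff_surjective f).2 hf
  have : IsSplitEpi (ofHom f) := isSplitEpi_of_epi _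
  exact surjective_of_epi _

theorem map_ofHom_injective_of_nonempty [Nonempty α] {f : α → β}
    (hf : Function.Injective f) : Function.Injective (G.map (ofHom f)) := by
  have : IsSplitMono (ofHom f) :=
    IsSplitMono.mk' ⟨ofHom (invFun f), by ext x; exact leftInverse_invFun hf x⟩
  exact injective_of_mono _

theorem map_ofHom_injective
    (hG : ∀ (A C : Type u) (g : A → C), IsEmpty A → Function.Injective g →
      Function.Injective (G.map (ofHom g)))
    {f : α → β} (hf : Function.Injective f) : Function.Injective (G.map (ofHom f)) := by
  cases isEmpty_or_nonempty α
  · exact hG _ _ f ‹_› hf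
  · exact G.map_ofHom_injective_of_nonempty hf

end CategoryTheory.Functor

theorem Function.exists_equiv_of_comp_eq_comp {α β β' γ : Type*} {e : α → β} {m : β → γ}
    {e' : α → β'} {m' : β' → γ} (he : Surjective e) (hm : Injective m) (he' : Surjective e')
    (hm' : Injective m') (h : m ∘ e = m' ∘ e') :
    ∃ φ : β ≃ β', φ ∘ e = e' ∧ m' ∘ φ = m := by
  set i := e' ∘ surjInv he
  have hm'i : m' ∘ i = m := by
    funext b
    simpa [i, surjInv_eq he b] using (congrFun h (surjInv he b)).symm
  have hie : i ∘ e = e' := by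
    funext a
    exact hm' (by simpa using (congrFun hm'i (e a)).trans (congrFun h a))
  refine ⟨Equiv.ofBijective i ⟨?_, ?_⟩, hie, hm'i⟩
  · exact Injective.of_comp (f := m') (hm'i ▸ hm)
  · exact Surjective.of_comp (g := e) (hie ▸ he')

section Dialgebra

variable {F B : Type u ⥤ Type u}

theorem IsDialgHom.of_comp {X Y Z : Dialgebra F B} {i : X.carrier → Y.carrier}
    {m : Y.carrier → Z.carrier} (hm : IsDialgHom Y Z m)
    (hBm : Function.Injective (B.map (ofHom m)))
    (hmi : IsDialgHom X Z (m ∘ i)) : IsDialgHom X Y i := by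
  funext a
  apply hBm
  calc B.map (ofHom m) (Y.str (F.map (ofHom i) a))
      = Z.str (F.map (ofHom m) (F.map (ofHom i) a)) := (congrFun hm _).symm
    _ = Z.str (F.map (ofHom (m ∘ i)) a) := congrArg Z.str (F.map_ofHom_comp_apply i m a).symm
    _ = B.map (ofHom (m ∘ i)) (X.str a) := congrFun hmi a
    _ = B.map (ofHom m) (B.map (ofHom i) (X.str a)) := B.map_ofHom_comp_apply _ _ _

noncomputable abbrev Dialgebra.pushforward (X : Dialgebra F B) {K : Type u}
    {e : X.carrier → K} (he : Function.Surjective e) : Dialgebra F B where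
  carrier := K
  str := B.map (ofHom e) ∘ X.str ∘ surjInv (F.map_ofHom_surjective he)

theorem IsDialgHom.pushforward_of_comp {X Y : Dialgebra F B} {K : Type u}
    {e : X.carrier → K} (he : Function.Surjective e) {m : K → Y.carrier}
    (hme : IsDialgHom X Y (m ∘ e)) : IsDialgHom (X.pushforward he) Y m := by
  funext a
  set s := surjInv (F.map_ofHom_surjective he) a
  have hs : F.map (ofHom e) s = a := surjInv_eq (F.map_ofHom_surjective he) a
  calc Y.str (F.map (ofHom m) a)
      = Y.str (F.map (ofHom m) (F.map (ofHom e) s)) := by rw [hs]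
    _ = Y.str (F.map (ofHom (m ∘ e)) s) := congrArg Y.str (F.map_ofHom_comp_apply e m s).symm
    _ = B.map (ofHom (m ∘ e)) (X.str s) := congrFun hme s
    _ = B.map (ofHom m) (B.map (ofHom e) (X.str s)) := B.map_ofHom_comp_apply _ _ _

end Dialgebra

theorem dialg_epi_mono_factorisation_general (F B : Type u ⥤ Type u)
    (hB : ∀ (A C : Type u) (g : A → C), IsEmpty A → Function.Injective g →
      Function.Injective (B.map (TypeCat.ofHom g)))
    (X Y : Dialgebra F B) (h : X.carrier → Y.carrier) (hh : IsDialgHom X Y h) :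
    ∃ (X' : Dialgebra F B) (e : X.carrier → X'.carrier) (m : X'.carrier → Y.carrier),
      IsDialgHom X X' e ∧ IsDialgHom X' Y m ∧
      Function.Surjective e ∧ Function.Injective m ∧ m ∘ e = h ∧
      -- uniqueness of the factorisation up to isomorphism
      ∀ (X'' : Dialgebra F B) (e' : X.carrier → X''.carrier) (m' : X''.carrier → Y.carrier),
        IsDialgHom X X'' e' → IsDialgHom X'' Y m' →
        Function.Surjective e' → Function.Injective m' → m' ∘ e' = h →
        ∃ (i : X'.carrier → X''.carrier) (j : X''.carrier → X'.carrier),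
          IsDialgHom X' X'' i ∧ IsDialgHom X'' X' j ∧
          i ∘ j = id ∧ j ∘ i = id ∧ i ∘ e = e' ∧ m' ∘ i = m := by
  have he : Function.Surjective (Set.rangeFactorization h) := Set.rangeFactorization_surjective
  have hm : IsDialgHom (X.pushforward he) Y Subtype.val := hh.pushforward_of_comp he
  have hBm := B.map_ofHom_injective hB (Subtype.val_injective (p := (· ∈ Set.range h)))
  refine ⟨X.pushforward he, Set.rangeFactorization h, Subtype.val, hm.of_comp hBm hh, hm, he,
    Subtype.val_injective, rfl, ?_⟩
  intro X'' e' m' _ hm' he' hm'_inj hm'e'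
  obtain ⟨φ, hφe, hφm⟩ :=
    Function.exists_equiv_of_comp_eq_comp he Subtype.val_injective he' hm'_inj hm'e'.symm
  have hφm_symm : Subtype.val ∘ φ.symm = m' := by
    rw [← hφm, comp_assoc, φ.self_comp_symm, comp_id]
  have hBm' := B.map_ofHom_injective hB hm'_inj
  exact ⟨φ, φ.symm, hm'.of_comp hBm' (hφm ▸ hm), hm.of_comp hBm (hφm_symm ▸ hm'),
    φ.self_comp_symm, φ.symm_comp_self, hφe, hφm⟩

/-- If `F` and `B` preserve monomorphisms with empty domain, then every dialgebra
homomorphism factors as an injective homomorphism after a surjective one, uniquely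
up to isomorphism of dialgebras. -/
theorem dialg_epi_mono_factorisation (F B : Type u ⥤ Type u)
    (hF : ∀ (A C : Type u) (g : A → C), IsEmpty A → Function.Injective g →
      Function.Injective (F.map (TypeCat.ofHom g)))
    (hB : ∀ (A C : Type u) (g : A → C), IsEmpty A → Function.Injective g →
      Function.Injective (B.map (TypeCat.ofHom g)))
    (X Y : Dialgebra F B) (h : X.carrier → Y.carrier) (hh : IsDialgHom X Y h) :
    ∃ (X' : Dialgebra F B) (e : X.carrier → X'.carrier) (m : X'.carrier → Y.carrier),
      IsDialgHom X X' e ∧ IsDialgHom X' Y m ∧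
      Function.Surjective e ∧ Function.Injective m ∧ m ∘ e = h ∧
      -- uniqueness of the factorisation up to isomorphism
      ∀ (X'' : Dialgebra F B) (e' : X.carrier → X''.carrier) (m' : X''.carrier → Y.carrier),
        IsDialgHom X X'' e' → IsDialgHom X'' Y m' →
        Function.Surjective e' → Function.Injective m' → m' ∘ e' = h →
        ∃ (i : X'.carrier → X''.carrier) (j : X''.carrier → X'.carrier),
          IsDialgHom X' X'' i ∧ IsDialgHom X'' X' j ∧
          i ∘ j = id ∧ j ∘ i = id ∧ i ∘ e = e' ∧ m' ∘ i = m :=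
  dialg_epi_mono_factorisation_general F B hB X Y h hh
end

section
/- If the domain X of a dialgebra homomorphism h : (X,f) → (Y,g) is nonempty, then h factors (in Dialg(F,B), for arbitrary Set endofunctors F and B) as an injective dialgebra homomorphism after a surjective dialgebra homomorphism. -/
open CategoryTheory

universe u

/-!
Factor `h` through its image as `h = val ∘ e` with `e : X → range h` surjective. Pick a section
`s` of `e` and give the image the structure `B e ∘ f ∘ F s`; the homomorphism square for `h`
makes `val` a homomorphism. For `e`, both sides of its square become equal after applying
`B val`, which is injective because `val` is an injection with nonempty domain, hence has a
retraction, and every functor preserves retractions.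
-/

universe v

namespace CategoryTheory.Functor

variable (G : Type u ⥤ Type v)

lemma map_ofHom_comp {α β γ : Type u} (g : β → γ) (f : α → β) :
    ⇑(G.map (↾(g ∘ f))) = G.map (↾g) ∘ G.map (↾f) :=
  funext (G.map_comp_apply (↾f) (↾g))

lemma map_injective_of_injective {α β : Type u} [Nonempty α] {f : α → β}
    (hf : Function.Injective f) : Function.Injective (G.map (↾f)) := by
  have : IsSplitMono (↾f) :=
    .mk' ⟨↾(Function.invFun f), by ext x; exact Function.leftInverse_invFun hf x⟩
  exact (mono_iff_injective _).mp inferInstance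

end CategoryTheory.Functor

namespace Dialgebra

variable {F B : Type u ⥤ Type u}

def induced (X : Dialgebra F B) {Z : Type u} (e : X.carrier → Z) (s : Z → X.carrier) :
    Dialgebra F B where
  carrier := Z
  str := B.map (↾e) ∘ X.str ∘ F.map (↾s)

lemma isDialgHom_induced {X Y : Dialgebra F B} {h : X.carrier → Y.carrier} {Z : Type u}
    {e : X.carrier → Z} {s : Z → X.carrier} {m : Z → Y.carrier}
    (hh : IsDialgHom X Y h) (hs : h ∘ s = m) (he : m ∘ e = h) :
    IsDialgHom (X.induced e s) Y m := by
  change Y.str ∘ F.map (↾m) = B.map (↾m) ∘ B.map (↾e) ∘ X.str ∘ F.map (↾s)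
  calc Y.str ∘ F.map (↾m) = (Y.str ∘ F.map (↾h)) ∘ F.map (↾s) := by
        rw [← hs, F.map_ofHom_comp]; rfl
    _ = (B.map (↾m) ∘ B.map (↾e)) ∘ X.str ∘ F.map (↾s) := by
        rw [hh, ← B.map_ofHom_comp, he]; rfl

lemma isDialgHom_of_isDialgHom_comp {X X' Y : Dialgebra F B} {e : X.carrier → X'.carrier}
    {m : X'.carrier → Y.carrier} (hm : IsDialgHom X' Y m) (hme : IsDialgHom X Y (m ∘ e))
    (hBm : Function.Injective (B.map (↾m))) : IsDialgHom X X' e := by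
  funext a
  apply hBm
  calc B.map (↾m) (X'.str (F.map (↾e) a)) = Y.str (F.map (↾m) (F.map (↾e) a)) :=
        (congrFun hm _).symm
    _ = B.map (↾(m ∘ e)) (X.str a) :=
        (congrArg Y.str (congrFun (F.map_ofHom_comp m e) a)).symm.trans (congrFun hme a)
    _ = B.map (↾m) (B.map (↾e) (X.str a)) := congrFun (B.map_ofHom_comp m e) _

end Dialgebra

/-- If the domain of a dialgebra homomorphism is nonempty, then it factors in
`Dialg(F,B)` (for arbitrary `Set` endofunctors `F`, `B`) as an injective dialgebra
homomorphism after a surjective one. -/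
theorem dialg_factorisation_of_nonempty (F B : Type u ⥤ Type u)
    (X Y : Dialgebra F B) (hne : Nonempty X.carrier)
    (h : X.carrier → Y.carrier) (hh : IsDialgHom X Y h) :
    ∃ (X' : Dialgebra F B) (e : X.carrier → X'.carrier) (m : X'.carrier → Y.carrier),
      IsDialgHom X X' e ∧ IsDialgHom X' Y m ∧
      Function.Surjective e ∧ Function.Injective m ∧ m ∘ e = h := by
  let e := Set.rangeFactorization h
  have he : Function.Surjective e := Set.rangeFactorization_surjective
  have hs : h ∘ Function.surjInv he = Subtype.val :=
    funext fun z => congrArg Subtype.val (Function.surjInv_eq he z)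
  have hm : IsDialgHom (X.induced e (Function.surjInv he)) Y Subtype.val :=
    Dialgebra.isDialgHom_induced hh hs rfl
  have : Nonempty (Set.range h) := hne.map e
  have hBm : Function.Injective (B.map (↾(Subtype.val : Set.range h → Y.carrier))) :=
    B.map_injective_of_injective Subtype.val_injective
  exact ⟨X.induced e (Function.surjInv he), e, Subtype.val,
    Dialgebra.isDialgHom_of_isDialgHom_comp (e := e) hm hh hBm, hm, he, Subtype.val_injective, rfl⟩
end

section
/- Let F(X) = X × X and B(X) = the finite powerset of X. Then the category Dialg(F,B) of (F,B)-dialgebras has no final object. -/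
/-!
Adjoin to a putative final dialgebra `Z` a fresh point `*` with `f(x,*) = f(*,x) = {*}` for
`x ∈ Z` and `f(*,*) = ∅`, and let `h` be the final map. Since `Z` sits inside the extension as a
subdialgebra, finality forces `h` to be the identity on `Z`. With `w := h *` this gives
`g(w,w) = g(h w, h *) = {w}`, while also `g(w,w) = g(h *, h *) = ∅`.
-/

universe u

/-- A dialgebra for `F(X) = X × X` and `B(X) = Pfin(X)` (the finite powerset). -/
structure FinDialg where
  carrier : Type u
  str : carrier × carrier → Finset carrier

/-- Homomorphism condition: `g(h x, h y) = { h z | z ∈ f(x,y) }`. -/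
def IsFinDialgHom (X Y : FinDialg.{u}) (h : X.carrier → Y.carrier) : Prop :=
  ∀ x y : X.carrier,
    (↑(Y.str (h x, h y)) : Set Y.carrier) = h '' ↑(X.str (x, y))

abbrev FinDialg.adjoinPoint (Z : FinDialg.{u}) : FinDialg.{u} where
  carrier := Option Z.carrier
  str
    | (some x, some y) => (Z.str (x, y)).map Function.Embedding.some
    | (none, none) => ∅
    | _ => {none}

theorem FinDialg.isFinDialgHom_some (Z : FinDialg.{u}) : IsFinDialgHom Z Z.adjoinPoint some :=
  fun _ _ => Finset.coe_map _ _

namespace IsFinDialgHom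

theorem id (X : FinDialg.{u}) : IsFinDialgHom X X id := fun _ _ => by simp

theorem comp {X Y W : FinDialg.{u}} {g : Y.carrier → W.carrier} {h : X.carrier → Y.carrier}
    (hg : IsFinDialgHom Y W g) (hh : IsFinDialgHom X Y h) : IsFinDialgHom X W (g ∘ h) :=
  fun x y => by rw [Function.comp_apply, Function.comp_apply, hg, hh, Set.image_comp]

theorem adjoinPoint_apply_some_ne_apply_none {Z Y : FinDialg.{u}}
    {h : Z.adjoinPoint.carrier → Y.carrier} (hh : IsFinDialgHom Z.adjoinPoint Y h)
    (z : Z.carrier) : h (some z) ≠ h none := by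
  intro hz
  have h_singleton : (↑(Y.str (h none, h none)) : Set Y.carrier) = {h none} := by
    simpa [hz] using hh (some z) none
  have h_empty : (↑(Y.str (h none, h none)) : Set Y.carrier) = ∅ := by
    simpa using hh none none
  exact Set.singleton_ne_empty _ (h_singleton.symm.trans h_empty)

end IsFinDialgHom

/-- For `F(X) = X × X` and `B(X) = Pfin(X)`, the category of `(F,B)`-dialgebras
has no final object. -/
theorem no_final_dialgebra :
    ¬ ∃ Z : FinDialg.{u}, ∀ X : FinDialg.{u},
        ∃! h : X.carrier → Z.carrier, IsFinDialgHom X Z h := by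
  rintro ⟨Z, hZ⟩
  obtain ⟨h, hh, -⟩ := hZ Z.adjoinPoint
  have h_retract : h ∘ some = id :=
    (hZ Z).unique (hh.comp Z.isFinDialgHom_some) (IsFinDialgHom.id Z)
  exact hh.adjoinPoint_apply_some_ne_apply_none (h none) (congrFun h_retract (h none))
end

section
/- If the Set endofunctor F preserves wide (small) pushouts of epimorphisms, then every (F,B)-dialgebra has a bisimilarity quotient, i.e., the wide pushout in Dialg(F,B) of the cone of all its quotients exists. -/
open CategoryTheory

universe u

/-- The quotients of a dialgebra `(X,f)`, indexed by setoids on the carrier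
together with a dialgebra structure on the quotient set making the projection a
homomorphism. -/
def QuotObj {F B : Type u ⥤ Type u} (X : Dialgebra F B) : Type u :=
  Σ s : Setoid X.carrier,
    { g : F.obj (_root_.Quotient s) → B.obj (_root_.Quotient s) //
      IsDialgHom X ⟨_root_.Quotient s, g⟩ (Quotient.mk s) }

/-!
The carrier of the bisimilarity quotient is the wide pushout in `Set` of all quotient maps
`X → X/s`, i.e. `X` divided by the join of their kernels. Since `F` preserves this wide pushout,
the structure maps of the quotients glue to a structure on it making the projection from `X` a
homomorphism. Everything else comes from one observation: `F` preserves surjections (they split),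
so a map out of the codomain of a surjective homomorphism `z` is a homomorphism as soon as its
composite with `z` is one.
-/

open Function

namespace CategoryTheory.Functor

lemma map_ofHom_comp_s7 (G : Type u ⥤ Type v) {A C D : Type u} (f : A → C) (g : C → D) :
    G.map (TypeCat.ofHom (g ∘ f)) = G.map (TypeCat.ofHom g) ∘ G.map (TypeCat.ofHom f) :=
  funext fun x => G.map_comp_apply (TypeCat.ofHom f) (TypeCat.ofHom g) x

lemma map_ofHom_surjective_s7 (G : Type u ⥤ Type v) {A C : Type u} {f : A → C}
    (hf : Surjective f) : Surjective (G.map (TypeCat.ofHom f)) := by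
  have : IsSplitEpi (TypeCat.ofHom f) := (isSplitEpi_iff_surjective _).mpr hf
  exact surjective_of_epi _

end CategoryTheory.Functor

def PreservesWidePushoutsOfSurjections (F : Type u ⥤ Type u) : Prop :=
  ∀ (X₀ I : Type u) (Y : I → Type u) (h : ∀ i, X₀ → Y i),
    (∀ i, Surjective (h i)) →
    ∀ u : ∀ i, Y i → Quot (fun a b : X₀ => ∃ i, h i a = h i b),
      (∀ i, u i ∘ h i = Quot.mk _) →
      ∀ (W : Type u) (k₀ : F.obj X₀ → W) (k : ∀ i, F.obj (Y i) → W),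
        (∀ i, k i ∘ F.map (TypeCat.ofHom (h i)) = k₀) →
        ∃! v : F.obj (Quot (fun a b : X₀ => ∃ i, h i a = h i b)) → W,
          v ∘ F.map (TypeCat.ofHom (Quot.mk _)) = k₀ ∧
            ∀ i, v ∘ F.map (TypeCat.ofHom (u i)) = k i

namespace Setoid

variable {α β I : Type*} (s : I → Setoid α)

def widePushoutRel (a b : α) : Prop :=
  ∃ i, Quotient.mk (s i) a = Quotient.mk (s i) b

def widePushoutLeg (i : I) : Quotient (s i) → Quot (widePushoutRel s) :=
  Quotient.lift (Quot.mk _) fun _ _ hab => Quot.sound ⟨i, Quotient.sound hab⟩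

variable {s}

lemma widePushoutRel_resp {w : α → β} {wleg : ∀ i, Quotient (s i) → β}
    (hw : ∀ i, wleg i ∘ Quotient.mk (s i) = w) {a b : α} (hab : widePushoutRel s a b) :
    w a = w b := by
  obtain ⟨i, hi⟩ := hab
  rw [← hw i, comp_apply, comp_apply, hi]

lemma lift_comp_widePushoutLeg {w : α → β} {wleg : ∀ i, Quotient (s i) → β}
    (hw : ∀ i, wleg i ∘ Quotient.mk (s i) = w) (i : I) :
    Quot.lift w (fun _ _ => widePushoutRel_resp hw) ∘ widePushoutLeg s i = wleg i :=
  funext <| Quotient.ind fun a => (congrFun (hw i) a).symm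

end Setoid

namespace IsDialgHom

variable {F B : Type u ⥤ Type u} {X Y Z : Dialgebra F B}

lemma map_comp_str {h : X.carrier → Y.carrier} (hh : IsDialgHom X Y h) {C : Type u}
    (k : Y.carrier → C) :
    (B.map (TypeCat.ofHom k) ∘ Y.str) ∘ F.map (TypeCat.ofHom h) =
      B.map (TypeCat.ofHom (k ∘ h)) ∘ X.str := by
  rw [comp_assoc, hh, B.map_ofHom_comp_s7 h k]
  rfl

lemma of_comp_surjective {z : X.carrier → Y.carrier} {v : Y.carrier → Z.carrier}
    (hz : IsDialgHom X Y z) (hz_surj : Surjective z) (hvz : IsDialgHom X Z (v ∘ z)) :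
    IsDialgHom Y Z v := by
  apply (F.map_ofHom_surjective_s7 hz_surj).injective_comp_right
  calc (Z.str ∘ F.map (TypeCat.ofHom v)) ∘ F.map (TypeCat.ofHom z)
      = Z.str ∘ F.map (TypeCat.ofHom (v ∘ z)) := by rw [F.map_ofHom_comp_s7 z v]; rfl
    _ = B.map (TypeCat.ofHom (v ∘ z)) ∘ X.str := hvz
    _ = (B.map (TypeCat.ofHom v) ∘ Y.str) ∘ F.map (TypeCat.ofHom z) := (hz.map_comp_str v).symm

end IsDialgHom

lemma exists_isDialgHom_quotMk_widePushout {F B : Type u ⥤ Type u}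
    (hF : PreservesWidePushoutsOfSurjections F) {X : Dialgebra F B} {I : Type u}
    (q : I → QuotObj X) :
    ∃ g, IsDialgHom X ⟨Quot (Setoid.widePushoutRel fun i => (q i).1), g⟩ (Quot.mk _) := by
  obtain ⟨g, ⟨hg, -⟩, -⟩ := hF X.carrier I (fun i => Quotient (q i).1) (fun i => Quotient.mk _)
    (fun _ => Quotient.mk_surjective) (Setoid.widePushoutLeg _) (fun _ => rfl) _
    (B.map (TypeCat.ofHom (Quot.mk _)) ∘ X.str)
    (fun i => B.map (TypeCat.ofHom (Setoid.widePushoutLeg _ i)) ∘ (q i).2.1)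
    (fun i => (q i).2.2.map_comp_str _)
  exact ⟨g, hg⟩

/-- If `F` preserves wide (small) pushouts of epimorphisms — i.e. for every small
family of surjections out of a set, `F` maps the canonical wide-pushout cocone in
`Set` to a colimiting cocone — then every `(F,B)`-dialgebra has a bisimilarity
quotient: the wide pushout in `Dialg(F,B)` of the cone of all its quotients
exists. -/
theorem bisimilarity_quotient_exists (F B : Type u ⥤ Type u)
    (hF : ∀ (X₀ I : Type u) (Y : I → Type u) (h : ∀ i, X₀ → Y i),
      (∀ i, Function.Surjective (h i)) →
      ∀ u : ∀ i, Y i → Quot (fun a b : X₀ => ∃ i, h i a = h i b),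
        (∀ i, u i ∘ h i = Quot.mk _) →
        ∀ (W : Type u) (k₀ : F.obj X₀ → W) (k : ∀ i, F.obj (Y i) → W),
          (∀ i, k i ∘ F.map (TypeCat.ofHom (h i)) = k₀) →
          ∃! v : F.obj (Quot (fun a b : X₀ => ∃ i, h i a = h i b)) → W,
            v ∘ F.map (TypeCat.ofHom (Quot.mk _)) = k₀ ∧ ∀ i, v ∘ F.map (TypeCat.ofHom (u i)) = k i) :
    ∀ X : Dialgebra F B,
      ∃ (Q : Dialgebra F B) (z : X.carrier → Q.carrier)
        (leg : ∀ p : QuotObj X, _root_.Quotient p.1 → Q.carrier),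
        IsDialgHom X Q z ∧
        (∀ p : QuotObj X,
          IsDialgHom ⟨_root_.Quotient p.1, p.2.1⟩ Q (leg p) ∧
          leg p ∘ Quotient.mk p.1 = z) ∧
        -- universal property of the wide pushout
        (∀ (W : Dialgebra F B) (w : X.carrier → W.carrier)
           (wleg : ∀ p : QuotObj X, _root_.Quotient p.1 → W.carrier),
          IsDialgHom X W w →
          (∀ p : QuotObj X,
            IsDialgHom ⟨_root_.Quotient p.1, p.2.1⟩ W (wleg p) ∧
            wleg p ∘ Quotient.mk p.1 = w) →
          ∃! v : Q.carrier → W.carrier,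
            IsDialgHom Q W v ∧ v ∘ z = w ∧ ∀ p, v ∘ leg p = wleg p) := by
  intro X
  obtain ⟨g, hg⟩ := exists_isDialgHom_quotMk_widePushout hF (id : QuotObj X → QuotObj X)
  refine ⟨⟨_, g⟩, Quot.mk _, Setoid.widePushoutLeg _, hg,
    fun p => ⟨p.2.2.of_comp_surjective Quotient.mk_surjective hg, rfl⟩, ?_⟩
  intro W w wleg hw hwleg
  have hw_leg : ∀ p, wleg p ∘ Quotient.mk p.1 = w := fun p => (hwleg p).2
  refine ⟨Quot.lift w fun _ _ => Setoid.widePushoutRel_resp hw_leg,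
    ⟨hg.of_comp_surjective Quot.mk_surjective hw, rfl, Setoid.lift_comp_widePushoutLeg hw_leg⟩,
    fun v ⟨_, hvz, _⟩ => Quot.mk_surjective.injective_comp_right hvz⟩
end

section
/- Let F(X) = X + X×X, B(X) = P(X), and let (X,f) be an (F,B)-dialgebra; write x → z for z ∈ f(inl x) and (x,y) → z for z ∈ f(inr (x,y)). An equivalence relation R ⊆ X × X is the kernel of some dialgebra homomorphism h : (X,f) → (Y,g) if and only if for all (x₁,x₂) ∈ R, (y₁,y₂) ∈ R and z₁ ∈ X: (i) x₁ → z₁ implies there is z₂ with x₂ → z₂ and (z₁,z₂) ∈ R; and (ii) (x₁,y₁) → z₁ implies there is z₂ with (x₂,y₂) → z₂ and (z₁,z₂) ∈ R. -/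
universe u

/-- Homomorphism condition for dialgebras of the interaction functor
`F(X) = X + X × X` and observation functor `B(X) = P(X)`:
`g ∘ F h = P(h) ∘ f`, spelled out componentwise. -/
def IsIOHom {X Y : Type u} (f : X ⊕ X × X → Set X) (g : Y ⊕ Y × Y → Set Y)
    (h : X → Y) : Prop :=
  (∀ x : X, g (Sum.inl (h x)) = h '' f (Sum.inl x)) ∧
  (∀ x y : X, g (Sum.inr (h x, h y)) = h '' f (Sum.inr (x, y)))

/-- The back-and-forth conditions for a relation on the carrier of an
`(F,B)`-dialgebra `f : X + X × X → P(X)`. -/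
def BackForth {X : Type u} (f : X ⊕ X × X → Set X) (R : X → X → Prop) : Prop :=
  ∀ x₁ x₂ y₁ y₂ : X, R x₁ x₂ → R y₁ y₂ →
    (∀ z₁ ∈ f (Sum.inl x₁), ∃ z₂ ∈ f (Sum.inl x₂), R z₁ z₂) ∧
    (∀ z₁ ∈ f (Sum.inr (x₁, y₁)), ∃ z₂ ∈ f (Sum.inr (x₂, y₂)), R z₁ z₂)

/-- An equivalence relation is the kernel of some dialgebra homomorphism out of
`(X,f)` if and only if it satisfies the back-and-forth conditions. -/
theorem kernel_iff_back_and_forth {X : Type u} (f : X ⊕ X × X → Set X)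
    (R : X → X → Prop) (hR : Equivalence R) :
    (∃ (Y : Type u) (g : Y ⊕ Y × Y → Set Y) (h : X → Y),
        IsIOHom f g h ∧ ∀ x y : X, R x y ↔ h x = h y) ↔
      BackForth f R := by
  constructor
  · rintro ⟨Y, g, h, ⟨hg1, hg2⟩, hker⟩ x₁ x₂ y₁ y₂ hx hy
    constructor
    · intro z₁ hz₁
      have : h z₁ ∈ h '' f (Sum.inl x₂) := by
        rw [← hg1, ← (hker x₁ x₂).1 hx, hg1]
        exact ⟨z₁, hz₁, rfl⟩
      obtain ⟨z₂, hz₂, he⟩ := this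
      exact ⟨z₂, hz₂, (hker z₁ z₂).2 he.symm⟩
    · intro z₁ hz₁
      have : h z₁ ∈ h '' f (Sum.inr (x₂, y₂)) := by
        rw [← hg2, ← (hker x₁ x₂).1 hx, ← (hker y₁ y₂).1 hy, hg2]
        exact ⟨z₁, hz₁, rfl⟩
      obtain ⟨z₂, hz₂, he⟩ := this
      exact ⟨z₂, hz₂, (hker z₁ z₂).2 he.symm⟩
  · intro hbf
    let s : Setoid X := ⟨R, hR⟩
    refine ⟨Quotient s, fun w => match w with
      | Sum.inl q => {p | ∃ x z, q = Quotient.mk s x ∧ z ∈ f (Sum.inl x) ∧ p = Quotient.mk s z}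
      | Sum.inr (q, r) => {p | ∃ x y z, q = Quotient.mk s x ∧ r = Quotient.mk s y ∧
          z ∈ f (Sum.inr (x, y)) ∧ p = Quotient.mk s z},
      Quotient.mk s, ⟨?_, ?_⟩, ?_⟩
    · intro x
      ext p
      constructor
      · rintro ⟨x', z, hq, hz, rfl⟩
        have hrx : R x' x := Quotient.exact hq.symm
        obtain ⟨z₂, hz₂, hrz⟩ := (hbf x' x x' x hrx hrx).1 z hz
        exact ⟨z₂, hz₂, (Quotient.sound (hrz : s.r z z₂)).symm⟩
      · rintro ⟨z, hz, rfl⟩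
        exact ⟨x, z, rfl, hz, rfl⟩
    · intro x y
      ext p
      constructor
      · rintro ⟨x', y', z, hq, hr, hz, rfl⟩
        have hrx : R x' x := Quotient.exact hq.symm
        have hry : R y' y := Quotient.exact hr.symm
        obtain ⟨z₂, hz₂, hrz⟩ := (hbf x' x y' y hrx hry).2 z hz
        exact ⟨z₂, hz₂, (Quotient.sound (hrz : s.r z z₂)).symm⟩
      · rintro ⟨z, hz, rfl⟩
        exact ⟨x, y, z, rfl, rfl, hz, rfl⟩
    · intro x y
      exact ⟨fun h => Quotient.sound (h : s.r x y), fun h => Quotient.exact h⟩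
end

section
/- For F(X) = X + X×X and B(X) = P(X), dialgebraic bisimilarity on an (F,B)-dialgebra (X,f) is the largest equivalence relation R satisfying the back-and-forth conditions: for (x₁,x₂), (y₁,y₂) ∈ R, x₁ → z₁ implies ∃z₂, x₂ → z₂ with (z₁,z₂) ∈ R, and (x₁,y₁) → z₁ implies ∃z₂, (x₂,y₂) → z₂ with (z₁,z₂) ∈ R. -/
universe u

/-- Dialgebraic bisimilarity: identification by some dialgebra homomorphism. -/
def Bisim {X : Type u} (f : X ⊕ X × X → Set X) (x y : X) : Prop :=
  ∃ (Y : Type u) (g : Y ⊕ Y × Y → Set Y) (h : X → Y), IsIOHom f g h ∧ h x = h y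

section Aux

variable {X : Type u} {f : X ⊕ X × X → Set X}

lemma forth_inl {R : X → X → Prop} (hE : Equivalence R) (hB : BackForth f R)
    {x₁ x₂ : X} (h : R x₁ x₂) :
    ∀ z₁ ∈ f (Sum.inl x₁), ∃ z₂ ∈ f (Sum.inl x₂), R z₁ z₂ :=
  (hB x₁ x₂ x₁ x₁ h (hE.refl x₁)).1

lemma forth_inr {R : X → X → Prop} (hB : BackForth f R)
    {x₁ x₂ y₁ y₂ : X} (hx : R x₁ x₂) (hy : R y₁ y₂) :
    ∀ z₁ ∈ f (Sum.inr (x₁, y₁)), ∃ z₂ ∈ f (Sum.inr (x₂, y₂)), R z₁ z₂ :=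
  (hB x₁ x₂ y₁ y₂ hx hy).2

/-- Any back-and-forth equivalence relation is contained in bisimilarity:
quotient construction. -/
lemma bisim_of_rel {R : X → X → Prop} (hE : Equivalence R) (hB : BackForth f R)
    {x y : X} (hxy : R x y) : Bisim f x y := by
  let s : Setoid X := ⟨R, hE⟩
  refine ⟨Quotient s,
    (fun q => match q with
      | Sum.inl p =>
          {w | ∃ a, Quotient.mk s a = p ∧ ∃ z ∈ f (Sum.inl a), Quotient.mk s z = w}
      | Sum.inr (p, q) =>
          {w | ∃ a b, Quotient.mk s a = p ∧ Quotient.mk s b = q ∧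
            ∃ z ∈ f (Sum.inr (a, b)), Quotient.mk s z = w}),
    Quotient.mk s, ⟨?_, ?_⟩, Quotient.sound hxy⟩
  · intro a
    ext w
    simp only [Set.mem_image, Set.mem_setOf_eq]
    constructor
    · rintro ⟨a', ha', z, hz, rfl⟩
      have hR : R a' a := Quotient.exact ha'
      obtain ⟨z₂, hz₂, hRz⟩ := forth_inl hE hB hR z hz
      exact ⟨z₂, hz₂, (Quotient.sound hRz).symm⟩
    · rintro ⟨z, hz, rfl⟩
      exact ⟨a, rfl, z, hz, rfl⟩
  · intro a b
    ext w
    simp only [Set.mem_image, Set.mem_setOf_eq]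
    constructor
    · rintro ⟨a', b', ha', hb', z, hz, rfl⟩
      have hRa : R a' a := Quotient.exact ha'
      have hRb : R b' b := Quotient.exact hb'
      obtain ⟨z₂, hz₂, hRz⟩ := forth_inr hB hRa hRb z hz
      exact ⟨z₂, hz₂, (Quotient.sound hRz).symm⟩
    · rintro ⟨z, hz, rfl⟩
      exact ⟨a, b, rfl, rfl, z, hz, rfl⟩

/-- The kernel of a homomorphism is an equivalence satisfying back-and-forth. -/
lemma kernel_backforth {Y : Type u} {g : Y ⊕ Y × Y → Set Y} {h : X → Y}
    (hh : IsIOHom f g h) : BackForth f (fun a b => h a = h b) := by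
  intro x₁ x₂ y₁ y₂ hx hy
  constructor
  · intro z₁ hz₁
    have : h z₁ ∈ g (Sum.inl (h x₂)) := by
      rw [← hx, hh.1 x₁]; exact ⟨z₁, hz₁, rfl⟩
    rw [hh.1 x₂] at this
    obtain ⟨z₂, hz₂, hzz⟩ := this
    exact ⟨z₂, hz₂, hzz.symm⟩
  · intro z₁ hz₁
    have : h z₁ ∈ g (Sum.inr (h x₂, h y₂)) := by
      rw [← hx, ← hy, hh.2 x₁ y₁]; exact ⟨z₁, hz₁, rfl⟩
    rw [hh.2 x₂ y₂] at this
    obtain ⟨z₂, hz₂, hzz⟩ := this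
    exact ⟨z₂, hz₂, hzz.symm⟩

section Combine

variable {R₁ R₂ : X → X → Prop}
  (hE₁ : Equivalence R₁) (hB₁ : BackForth f R₁)
  (hE₂ : Equivalence R₂) (hB₂ : BackForth f R₂)

/-- Combination of two back-and-forth equivalences. -/
def combRel (R₁ R₂ : X → X → Prop) : X → X → Prop :=
  Relation.TransGen (fun a b => R₁ a b ∨ R₂ a b)

include hE₁ hE₂ in
lemma comb_equiv : Equivalence (combRel R₁ R₂) := by
  unfold combRel
  refine ⟨fun a => Relation.TransGen.single (Or.inl (hE₁.refl a)), ?_,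
    fun h1 h2 => Relation.TransGen.trans h1 h2⟩
  intro a b hab
  induction hab with
  | single hT => exact Relation.TransGen.single (hT.imp hE₁.symm hE₂.symm)
  | tail _ hT ih =>
    exact Relation.TransGen.head (hT.imp hE₁.symm hE₂.symm) ih

include hE₁ hB₁ hE₂ hB₂ in
lemma comb_forth_inl {x₁ x₂ : X} (h : combRel R₁ R₂ x₁ x₂) :
    ∀ z₁ ∈ f (Sum.inl x₁), ∃ z₂ ∈ f (Sum.inl x₂), combRel R₁ R₂ z₁ z₂ := by
  induction h with
  | single hT =>
    intro z₁ hz₁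
    rcases hT with hT | hT
    · obtain ⟨z₂, hz₂, hR⟩ := forth_inl hE₁ hB₁ hT z₁ hz₁
      exact ⟨z₂, hz₂, Relation.TransGen.single (Or.inl hR)⟩
    · obtain ⟨z₂, hz₂, hR⟩ := forth_inl hE₂ hB₂ hT z₁ hz₁
      exact ⟨z₂, hz₂, Relation.TransGen.single (Or.inr hR)⟩
  | tail _ hT ih =>
    intro z₁ hz₁
    obtain ⟨z₂, hz₂, hS⟩ := ih z₁ hz₁
    rcases hT with hT | hT
    · obtain ⟨z₃, hz₃, hR⟩ := forth_inl hE₁ hB₁ hT z₂ hz₂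
      exact ⟨z₃, hz₃, hS.trans (Relation.TransGen.single (Or.inl hR))⟩
    · obtain ⟨z₃, hz₃, hR⟩ := forth_inl hE₂ hB₂ hT z₂ hz₂
      exact ⟨z₃, hz₃, hS.trans (Relation.TransGen.single (Or.inr hR))⟩

include hE₁ hB₁ hE₂ hB₂ in
lemma comb_forth_inr_left {x₁ x₂ : X} (h : combRel R₁ R₂ x₁ x₂) :
    ∀ y : X, ∀ z₁ ∈ f (Sum.inr (x₁, y)), ∃ z₂ ∈ f (Sum.inr (x₂, y)), combRel R₁ R₂ z₁ z₂ := by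
  induction h with
  | single hT =>
    intro y z₁ hz₁
    rcases hT with hT | hT
    · obtain ⟨z₂, hz₂, hR⟩ := forth_inr hB₁ hT (hE₁.refl y) z₁ hz₁
      exact ⟨z₂, hz₂, Relation.TransGen.single (Or.inl hR)⟩
    · obtain ⟨z₂, hz₂, hR⟩ := forth_inr hB₂ hT (hE₂.refl y) z₁ hz₁
      exact ⟨z₂, hz₂, Relation.TransGen.single (Or.inr hR)⟩
  | tail _ hT ih =>
    intro y z₁ hz₁
    obtain ⟨z₂, hz₂, hS⟩ := ih y z₁ hz₁
    rcases hT with hT | hT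
    · obtain ⟨z₃, hz₃, hR⟩ := forth_inr hB₁ hT (hE₁.refl y) z₂ hz₂
      exact ⟨z₃, hz₃, hS.trans (Relation.TransGen.single (Or.inl hR))⟩
    · obtain ⟨z₃, hz₃, hR⟩ := forth_inr hB₂ hT (hE₂.refl y) z₂ hz₂
      exact ⟨z₃, hz₃, hS.trans (Relation.TransGen.single (Or.inr hR))⟩

include hE₁ hB₁ hE₂ hB₂ in
lemma comb_forth_inr_right {y₁ y₂ : X} (h : combRel R₁ R₂ y₁ y₂) :
    ∀ x : X, ∀ z₁ ∈ f (Sum.inr (x, y₁)), ∃ z₂ ∈ f (Sum.inr (x, y₂)), combRel R₁ R₂ z₁ z₂ := by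
  induction h with
  | single hT =>
    intro x z₁ hz₁
    rcases hT with hT | hT
    · obtain ⟨z₂, hz₂, hR⟩ := forth_inr hB₁ (hE₁.refl x) hT z₁ hz₁
      exact ⟨z₂, hz₂, Relation.TransGen.single (Or.inl hR)⟩
    · obtain ⟨z₂, hz₂, hR⟩ := forth_inr hB₂ (hE₂.refl x) hT z₁ hz₁
      exact ⟨z₂, hz₂, Relation.TransGen.single (Or.inr hR)⟩
  | tail _ hT ih =>
    intro x z₁ hz₁
    obtain ⟨z₂, hz₂, hS⟩ := ih x z₁ hz₁
    rcases hT with hT | hT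
    · obtain ⟨z₃, hz₃, hR⟩ := forth_inr hB₁ (hE₁.refl x) hT z₂ hz₂
      exact ⟨z₃, hz₃, hS.trans (Relation.TransGen.single (Or.inl hR))⟩
    · obtain ⟨z₃, hz₃, hR⟩ := forth_inr hB₂ (hE₂.refl x) hT z₂ hz₂
      exact ⟨z₃, hz₃, hS.trans (Relation.TransGen.single (Or.inr hR))⟩

include hE₁ hB₁ hE₂ hB₂ in
lemma comb_backforth : BackForth f (combRel R₁ R₂) := by
  intro x₁ x₂ y₁ y₂ hx hy
  constructor
  · exact comb_forth_inl hE₁ hB₁ hE₂ hB₂ hx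
  · intro z₁ hz₁
    obtain ⟨z₂, hz₂, hS⟩ := comb_forth_inr_left hE₁ hB₁ hE₂ hB₂ hx y₁ z₁ hz₁
    obtain ⟨z₃, hz₃, hS'⟩ := comb_forth_inr_right hE₁ hB₁ hE₂ hB₂ hy x₂ z₂ hz₂
    exact ⟨z₃, hz₃, hS.trans hS'⟩

end Combine

end Aux

/-- Dialgebraic bisimilarity is the largest equivalence relation satisfying the
back-and-forth conditions. -/
theorem bisimilarity_largest_back_and_forth {X : Type u}
    (f : X ⊕ X × X → Set X) :
    Equivalence (Bisim f) ∧ BackForth f (Bisim f) ∧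
    ∀ R : X → X → Prop, Equivalence R → BackForth f R →
      ∀ x y : X, R x y → Bisim f x y := by
  have hrefl : ∀ x, Bisim f x x := fun x => ⟨X, f, id, ⟨by simp, by simp⟩, rfl⟩
  have hsymm : ∀ {x y}, Bisim f x y → Bisim f y x := by
    rintro x y ⟨Y, g, h, hh, hxy⟩
    exact ⟨Y, g, h, hh, hxy.symm⟩
  refine ⟨⟨hrefl, hsymm, ?_⟩, ?_, fun R hE hB x y => bisim_of_rel hE hB⟩
  · rintro x y z ⟨Y₁, g₁, h₁, hh₁, hxy⟩ ⟨Y₂, g₂, h₂, hh₂, hyz⟩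
    have hE₁ : Equivalence (fun a b => h₁ a = h₁ b) :=
      ⟨fun _ => rfl, Eq.symm, Eq.trans⟩
    have hE₂ : Equivalence (fun a b => h₂ a = h₂ b) :=
      ⟨fun _ => rfl, Eq.symm, Eq.trans⟩
    have hB₁ := kernel_backforth hh₁
    have hB₂ := kernel_backforth hh₂
    have hSx : combRel (fun a b => h₁ a = h₁ b) (fun a b => h₂ a = h₂ b) x y :=
      Relation.TransGen.single (Or.inl hxy)
    have hSy : combRel (fun a b => h₁ a = h₁ b) (fun a b => h₂ a = h₂ b) y z :=
      Relation.TransGen.single (Or.inr hyz)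
    exact bisim_of_rel (comb_equiv hE₁ hE₂) (comb_backforth hE₁ hB₁ hE₂ hB₂)
      (Relation.TransGen.trans hSx hSy)
  · rintro x₁ x₂ y₁ y₂ ⟨Y₁, g₁, h₁, hh₁, hx⟩ ⟨Y₂, g₂, h₂, hh₂, hy⟩
    have hE₁ : Equivalence (fun a b => h₁ a = h₁ b) :=
      ⟨fun _ => rfl, Eq.symm, Eq.trans⟩
    have hE₂ : Equivalence (fun a b => h₂ a = h₂ b) :=
      ⟨fun _ => rfl, Eq.symm, Eq.trans⟩
    have hB₁ := kernel_backforth hh₁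
    have hB₂ := kernel_backforth hh₂
    have hBF := comb_backforth hE₁ hB₁ hE₂ hB₂
    have hEq := comb_equiv hE₁ hE₂
    have hSx : combRel (fun a b => h₁ a = h₁ b) (fun a b => h₂ a = h₂ b) x₁ x₂ :=
      Relation.TransGen.single (Or.inl hx)
    have hSy : combRel (fun a b => h₁ a = h₁ b) (fun a b => h₂ a = h₂ b) y₁ y₂ :=
      Relation.TransGen.single (Or.inr hy)
    obtain ⟨h1, h2⟩ := hBF x₁ x₂ y₁ y₂ hSx hSy
    constructor
    · intro z₁ hz₁
      obtain ⟨z₂, hz₂, hS⟩ := h1 z₁ hz₁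
      exact ⟨z₂, hz₂, bisim_of_rel hEq hBF hS⟩
    · intro z₁ hz₁
      obtain ⟨z₂, hz₂, hS⟩ := h2 z₁ hz₁
      exact ⟨z₂, hz₂, bisim_of_rel hEq hBF hS⟩
end

section
/- Given an equivalence relation R on the carrier X of an (F,B)-dialgebra (X,f) with F(X)=X+X×X, B(X)=P(X), satisfying the back-and-forth conditions, the quotient set Y = X/R carries a dialgebra structure g defined by g([x]) = { [z] | ∃x', x R x' ∧ z ∈ f(inl x') } and g([x],[y]) = { [z] | ∃x' y', x R x' ∧ y R y' ∧ z ∈ f(inr (x',y')) }, and the quotient map x ↦ [x] is a dialgebra homomorphism whose kernel is exactly R. -/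
universe u

/-- The dialgebra structure induced on the quotient `X/R` by a dialgebra
`f : X + X × X → P(X)`:
`g([x]) = { [z] | ∃ x', x R x' ∧ z ∈ f(inl x') }` and
`g([x],[y]) = { [z] | ∃ x' y', x R x' ∧ y R y' ∧ z ∈ f(inr (x',y')) }`. -/
def quotStr {X : Type u} (f : X ⊕ X × X → Set X) (s : Setoid X) :
    _root_.Quotient s ⊕ _root_.Quotient s × _root_.Quotient s →
      Set (_root_.Quotient s)
  | Sum.inl q =>
      { c | ∃ x x' z, q = Quotient.mk s x ∧ s.r x x' ∧
            z ∈ f (Sum.inl x') ∧ c = Quotient.mk s z }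
  | Sum.inr (q₁, q₂) =>
      { c | ∃ x y x' y' z, q₁ = Quotient.mk s x ∧ q₂ = Quotient.mk s y ∧
            s.r x x' ∧ s.r y y' ∧ z ∈ f (Sum.inr (x', y')) ∧ c = Quotient.mk s z }

/-- Given an equivalence relation `R` satisfying the back-and-forth conditions,
the quotient set `X/R` carries the dialgebra structure `quotStr`, the quotient
map is a dialgebra homomorphism, and its kernel is exactly `R`. -/
theorem quotient_dialgebra_of_back_and_forth {X : Type u}
    (f : X ⊕ X × X → Set X) (R : X → X → Prop) (hR : Equivalence R)
    (hBF : BackForth f R) :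
    IsIOHom f (quotStr f ⟨R, hR⟩) (Quotient.mk ⟨R, hR⟩) ∧
    (∀ x y : X, Quotient.mk ⟨R, hR⟩ x = Quotient.mk ⟨R, hR⟩ y ↔ R x y) := by
  have hker : ∀ x y : X, Quotient.mk ⟨R, hR⟩ x = Quotient.mk ⟨R, hR⟩ y ↔ R x y :=
    fun x y => ⟨fun h => Quotient.exact h, fun h => Quotient.sound h⟩
  refine ⟨⟨fun x => ?_, fun x y => ?_⟩, hker⟩
  · ext c
    constructor
    · rintro ⟨x₀, x', z, hq, hxx', hz, rfl⟩
      have hx₀ : R x x₀ := (hker x x₀).mp hq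
      have : R x' x := hR.symm (hR.trans hx₀ hxx')
      obtain ⟨z₂, hz₂, hzz₂⟩ := (hBF x' x x' x this this).1 z hz
      exact ⟨z₂, hz₂, Quotient.sound (hR.symm hzz₂)⟩
    · rintro ⟨z, hz, rfl⟩
      exact ⟨x, x, z, rfl, hR.refl x, hz, rfl⟩
  · ext c
    constructor
    · rintro ⟨x₀, y₀, x', y', z, hq₁, hq₂, hxx', hyy', hz, rfl⟩
      have hx : R x' x := hR.symm (hR.trans ((hker x x₀).mp hq₁) hxx')
      have hy : R y' y := hR.symm (hR.trans ((hker y y₀).mp hq₂) hyy')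
      obtain ⟨z₂, hz₂, hzz₂⟩ := (hBF x' x y' y hx hy).2 z hz
      exact ⟨z₂, hz₂, Quotient.sound (hR.symm hzz₂)⟩
    · rintro ⟨z, hz, rfl⟩
      exact ⟨x, y, x, y, z, rfl, rfl, hR.refl x, hR.refl y, hz, rfl⟩
end

section
/- Let (X,f) be an (F,B)-dialgebra, C a full subcategory of the coslice category (X,f)/E (E the subcategory of epimorphisms of Dialg(F,B)) containing the identity of (X,f), and let F̄, Ḡ : C → Set be functors with F̄ preserving epimorphisms. Then there is a one-to-one correspondence between natural transformations δ : F̄ ⟹ Ḡ and functions k : F̄(id_{(X,f)}) → Ḡ(id_{(X,f)}) that are bisimulation invariant, i.e., for every object h of C (viewed as an arrow ĥ : id_{(X,f)} → h in C) and all x₁,x₂, F̄(ĥ)(x₁) = F̄(ĥ)(x₂) implies Ḡ(ĥ)(k x₁) = Ḡ(ĥ)(k x₂). Each natural δ is uniquely determined by its component δ at id_{(X,f)}, which is invariant; conversely each invariant k extends uniquely to a natural transformation. -/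
open CategoryTheory

universe u

instance dialgCategory (F B : Type u ⥤ Type u) : Category (Dialgebra F B) where
  Hom X Y := { h : X.carrier → Y.carrier // IsDialgHom X Y h }
  id X := ⟨id, by
    show X.str ∘ F.map (TypeCat.ofHom id) = B.map (TypeCat.ofHom id) ∘ X.str
    rw [show TypeCat.ofHom (id : X.carrier → X.carrier) = 𝟙 X.carrier from rfl,
      F.map_id, B.map_id]; rfl⟩
  comp {X Y Z} f g := ⟨g.1 ∘ f.1, by
    have hf := f.2; have hg := g.2
    simp only [IsDialgHom] at *
    have h1 : F.map (TypeCat.ofHom (g.1 ∘ f.1)) =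
        (TypeCat.ofHom f.1 ≫ TypeCat.ofHom g.1 |> F.map) := rfl
    have h2 : B.map (TypeCat.ofHom (g.1 ∘ f.1)) =
        (TypeCat.ofHom f.1 ≫ TypeCat.ofHom g.1 |> B.map) := rfl
    rw [F.map_comp] at h1; rw [B.map_comp] at h2
    calc Z.str ∘ F.map (TypeCat.ofHom (g.1 ∘ f.1))
          = (Z.str ∘ F.map (TypeCat.ofHom g.1)) ∘ F.map (TypeCat.ofHom f.1) := by
          rw [h1]; rfl
      _ = (B.map (TypeCat.ofHom g.1) ∘ Y.str) ∘ F.map (TypeCat.ofHom f.1) := by rw [hg]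
      _ = B.map (TypeCat.ofHom g.1) ∘ (Y.str ∘ F.map (TypeCat.ofHom f.1)) := rfl
      _ = B.map (TypeCat.ofHom g.1) ∘ (B.map (TypeCat.ofHom f.1) ∘ X.str) := by rw [hf]
      _ = B.map (TypeCat.ofHom (g.1 ∘ f.1)) ∘ X.str := by rw [h2]; rfl⟩
  id_comp f := Subtype.ext rfl
  comp_id f := Subtype.ext rfl
  assoc f g h := Subtype.ext rfl

open Limits Function

universe w

/-!
Since `id_{(X,f)}` is initial in `C`, every object `h` receives exactly one arrow `ĥ` from it,
and `ĥ` is epi (its underlying map is the epimorphism `h`). As `F̄` preserves epimorphisms,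
each `F̄(ĥ)` is surjective, so a natural `δ` is determined at `h` by
`δ_h (F̄ ĥ x) = Ḡ ĥ (δ x)`. Read as a definition, the same equation extends an invariant `k`,
and initiality of `id_{(X,f)}` makes the extension natural.
-/

namespace CategoryTheory

variable {C : Type*} [Category C] {c₀ : C} {F G : C ⥤ Type w}

lemma NatTrans.factorsThrough_app (δ : F ⟶ G) {c : C} (f : c₀ ⟶ c) :
    FactorsThrough (G.map f ∘ δ.app c₀) (F.map f) := fun x₁ x₂ hx => by
  simp only [Function.comp_apply, ← NatTrans.naturality_apply, hx]

lemma NatTrans.ext_of_surjective_map (hat : ∀ c, c₀ ⟶ c)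
    (hsurj : ∀ c, Surjective (F.map (hat c))) {δ δ' : F ⟶ G}
    (h : (δ.app c₀ : F.obj c₀ → G.obj c₀) = δ'.app c₀) :
    δ = δ' := by
  ext c : 2
  refine ConcreteCategory.hom_ext _ _ fun y => ?_
  obtain ⟨x, rfl⟩ := hsurj c y
  simp only [NatTrans.naturality_apply, h]

namespace Limits.IsInitial

variable (hc₀ : IsInitial c₀) (hsurj : ∀ c, Surjective (F.map (hc₀.to c)))
  (k : F.obj c₀ → G.obj c₀)

def IsInvariant : Prop :=
  ∀ c, FactorsThrough (G.map (hc₀.to c) ∘ k) (F.map (hc₀.to c))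

lemma map_to_surjInv (hk : hc₀.IsInvariant k) (c : C) (x : F.obj c₀) :
    G.map (hc₀.to c) (k (surjInv (hsurj c) (F.map (hc₀.to c) x))) = G.map (hc₀.to c) (k x) :=
  hk c (surjInv_eq (hsurj c) _)

noncomputable def natTransOfIsInvariant (hk : hc₀.IsInvariant k) : F ⟶ G where
  app c := TypeCat.ofHom (G.map (hc₀.to c) ∘ k ∘ surjInv (hsurj c))
  naturality c c' m := by
    refine ConcreteCategory.hom_ext _ _ fun y => ?_
    obtain ⟨x, rfl⟩ := hsurj c y
    have hm : hc₀.to c ≫ m = hc₀.to c' := hc₀.hom_ext _ _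
    simp only [types_comp_apply, TypeCat.ofHom_apply, Function.comp_apply,
      ← Functor.map_comp_apply, hm, map_to_surjInv hc₀ hsurj k hk]

lemma natTransOfIsInvariant_app_self (hk : hc₀.IsInvariant k) :
    ((natTransOfIsInvariant hc₀ hsurj k hk).app c₀ : F.obj c₀ → G.obj c₀) = k := by
  ext x
  show G.map (hc₀.to c₀) (k (surjInv (hsurj c₀) x)) = k x
  simpa [hc₀.hom_ext (hc₀.to c₀) (𝟙 c₀)] using map_to_surjInv hc₀ hsurj k hk c₀ x

end Limits.IsInitial

lemma Under.epi_of_mk_id {T : Type*} [Category T] {X : T} {U : Under X}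
    (f : Under.mk (𝟙 X) ⟶ U) [Epi U.hom] : Epi f := by
  have hf : f.right = U.hom := by simpa using Under.w f
  have : Epi f.right := hf ▸ inferInstance
  exact Under.epi_of_epi_right f

end CategoryTheory

open CategoryTheory in
/-- Theorem (one-to-one correspondence between natural transformations and
bisimulation invariants).  Let `(X,f)` be a dialgebra, `C` a full subcategory of
the coslice `(X,f)/E` (where `E` consists of the epimorphisms of `Dialg(F,B)`)
containing the identity of `(X,f)`, and `F̄, Ḡ : C ⥤ Set` with `F̄` preserving
epimorphisms.  Every natural transformation `δ : F̄ ⟹ Ḡ` has bisimulation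
invariant component at `id_{(X,f)}` and is uniquely determined by it; conversely
every bisimulation invariant extends uniquely to a natural transformation. -/
theorem invariants_correspond_to_natural_transformations
    (F B : Type u ⥤ Type u) (X : Dialgebra F B)
    (P : Under X → Prop)
    (hPid : P (Under.mk (𝟙 X)))
    (hPepi : ∀ u : Under X, P u → Epi u.hom)
    (Fb Gb : ObjectProperty.FullSubcategory P ⥤ Type u)
    (hFb : ∀ {c c' : ObjectProperty.FullSubcategory P} (k : c ⟶ c'), Epi k → Epi (Fb.map k)) :
    let c₀ : ObjectProperty.FullSubcategory P := ⟨Under.mk (𝟙 X), hPid⟩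
    ∀ hat : ∀ c : ObjectProperty.FullSubcategory P, c₀ ⟶ c,
      -- `hat c` is the canonical arrow `ĥ : id_{(X,f)} → h` in the coslice
      (∀ c : ObjectProperty.FullSubcategory P, (hat c).hom.right = c.obj.hom) →
      -- bisimulation invariance of a function k
      let Inv : (Fb.obj c₀ → Gb.obj c₀) → Prop := fun k =>
        ∀ (c : ObjectProperty.FullSubcategory P) (x₁ x₂ : Fb.obj c₀),
          Fb.map (hat c) x₁ = Fb.map (hat c) x₂ →
          Gb.map (hat c) (k x₁) = Gb.map (hat c) (k x₂)
      (∀ δ : Fb ⟶ Gb, Inv (δ.app c₀)) ∧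
      (∀ δ δ' : Fb ⟶ Gb, δ.app c₀ = δ'.app c₀ → δ = δ') ∧
      (∀ k : Fb.obj c₀ → Gb.obj c₀, Inv k → ∃! δ : Fb ⟶ Gb, δ.app c₀ = k) := by
  intro c₀ hat _ Inv
  let hc₀ : IsInitial c₀ := IsInitial.isInitialOfObj (ObjectProperty.ι P) _ Under.mkIdInitial
  obtain rfl : hat = fun c => hc₀.to c := funext fun c => hc₀.hom_ext _ _
  have hsurj (c : ObjectProperty.FullSubcategory P) : Surjective (Fb.map (hc₀.to c)) := by
    have := hPepi c.obj c.property
    have : Epi (hc₀.to c) := (ObjectProperty.ι P).epi_of_epi_map (Under.epi_of_mk_id (U := c.obj) _)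
    exact (epi_iff_surjective _).mp (hFb _ this)
  refine ⟨fun δ c => δ.factorsThrough_app (hc₀.to c),
    fun δ δ' h => NatTrans.ext_of_surjective_map _ hsurj (by rw [h]), fun k hk => ?_⟩
  exact ⟨hc₀.natTransOfIsInvariant hsurj k hk, hc₀.natTransOfIsInvariant_app_self hsurj k hk,
    fun δ hδ => NatTrans.ext_of_surjective_map _ hsurj
      (hδ.trans (hc₀.natTransOfIsInvariant_app_self hsurj k hk).symm)⟩
end
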